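/- The infinite matrices D^±, R^∓, and C satisfy the Heisenberg-algebra commutation relation D^+_{k,m-1} R^-_{k,m} − R^-_{k+1,m+1} D^+_{k,m} = √2 · C_{k,m}, where the matrices have entries D^+_{n',n} = √(2n(n+k+m+1)) δ_{n',n-1}, R^-_{n',n} = √((n+1)(n+k+1)/((2n+k+m+1)(2n+k+m+2))) δ_{n',n+1} + √((n+m)(n+k+m)/((2n+k+m)(2n+k+m+1))) δ_{n',n}, and C_{n',n} = √((n+k+1)(n+k+m+1)/((2n+k+m+1)(2n+k+m+2))) δ_{n',n} − √(n(n+m)/((2n+k+m)(2n+k+m+1))) δ_{n',n-1}, with parameters (k,m) as subscripted. -/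
import Mathlib


/-- Entries of the raising derivative matrix `D⁺_{k,m}`: `√(2n(n+k+m+1)) δ_{n',n-1}`. -/
noncomputable def Dplus (k m : ℕ) (n' n : ℕ) : ℝ :=
  if n' + 1 = n then Real.sqrt (2 * (n : ℝ) * (n + k + m + 1)) else 0

/-- Entries of the lowering derivative matrix `D⁻_{k,m}`: `√(2(n+k+1)(n+m)) δ_{n',n}`. -/
noncomputable def Dminus (k m : ℕ) (n' n : ℕ) : ℝ :=
  if n' = n then Real.sqrt (2 * ((n : ℝ) + k + 1) * (n + m)) else 0

/-- Entries of the multiplication matrix `R⁺_{k,m}`. -/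
noncomputable def Rplus (k m : ℕ) (n' n : ℕ) : ℝ :=
  (if n' = n then
    Real.sqrt (((n : ℝ) + m + 1) * (n + k + m + 1) /
      ((2 * (n : ℝ) + k + m + 1) * (2 * n + k + m + 2))) else 0) +
  (if n' + 1 = n then
    Real.sqrt ((n : ℝ) * (n + k) / ((2 * (n : ℝ) + k + m) * (2 * n + k + m + 1))) else 0)

/-- Entries of the multiplication matrix `R⁻_{k,m}`. -/
noncomputable def Rminus (k m : ℕ) (n' n : ℕ) : ℝ :=
  (if n' = n + 1 then
    Real.sqrt (((n : ℝ) + 1) * (n + k + 1) /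
      ((2 * (n : ℝ) + k + m + 1) * (2 * n + k + m + 2))) else 0) +
  (if n' = n then
    Real.sqrt (((n : ℝ) + m) * (n + k + m) /
      ((2 * (n : ℝ) + k + m) * (2 * n + k + m + 1))) else 0)

/-- Entries of the conversion matrix `C_{k,m}`. -/
noncomputable def Cmat (k m : ℕ) (n' n : ℕ) : ℝ :=
  (if n' = n then
    Real.sqrt (((n : ℝ) + k + 1) * (n + k + m + 1) /
      ((2 * (n : ℝ) + k + m + 1) * (2 * n + k + m + 2))) else 0) -
  (if n' + 1 = n then
    Real.sqrt ((n : ℝ) * (n + m) / ((2 * (n : ℝ) + k + m) * (2 * n + k + m + 1))) else 0)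

lemma sqrt_mul_sqrt_eq (a b c E : ℝ) (ha : 0 ≤ a) (hc : 0 ≤ c) (h : a * b = c^2 * E) :
    Real.sqrt a * Real.sqrt b = c * Real.sqrt E := by
  rw [← Real.sqrt_mul ha, h, Real.sqrt_mul (sq_nonneg c), Real.sqrt_sq hc]

theorem heisenberg_commutator (k m : ℕ) (hk : 1 ≤ k) (hm : 1 ≤ m) (n' n : ℕ) :
    (∑' j : ℕ, Dplus k (m - 1) n' j * Rminus k m j n) -
      (∑' j : ℕ, Rminus (k + 1) (m + 1) n' j * Dplus k m j n) =
    Real.sqrt 2 * Cmat k m n' n := by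
  have hs1 : (∑' j : ℕ, Dplus k (m - 1) n' j * Rminus k m j n)
      = Dplus k (m-1) n' (n'+1) * Rminus k m (n'+1) n := by
    refine tsum_eq_single _ fun j hj => ?_
    have h : ¬ (n' + 1 = j) := fun h => hj h.symm
    simp [Dplus, h]
  have hs2 : (∑' j : ℕ, Rminus (k+1) (m+1) n' j * Dplus k m j n)
      = Rminus (k+1) (m+1) n' (n-1) * Dplus k m (n-1) n := by
    refine tsum_eq_single _ fun j hj => ?_
    have h : ¬ (j + 1 = n) := by omega
    simp [Dplus, h]
  rw [hs1, hs2]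
  have hm1 : ((m - 1 : ℕ) : ℝ) = (m : ℝ) - 1 := by
    rw [Nat.cast_sub hm, Nat.cast_one]
  rcases eq_or_ne n' n with rfl|hne
  · rcases Nat.eq_zero_or_pos n' with rfl|hn
    · simp only [Dplus, Rminus, Cmat]
      norm_num [hm1]
      have e0 : (1 + (k:ℝ) + ((m:ℝ) - 1) + 1) = (k:ℝ) + (m:ℝ) + 1 := by ring
      rw [e0, mul_assoc, ← Real.sqrt_mul (by positivity : (0:ℝ) ≤ (k:ℝ)+(m:ℝ)+1)]
      congr 2
      ring
    · have hn1 : ((n' - 1 : ℕ) : ℝ) = (n' : ℝ) - 1 := by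
        rw [Nat.cast_sub hn, Nat.cast_one]
      simp only [Dplus, Rminus, Cmat, hm1, hn1]
      split_ifs <;> first | omega | exact absurd trivial ‹¬True› | skip
      push_cast
      rw [add_zero, add_zero, sub_zero]
      have hN : (0:ℝ) ≤ (n':ℝ) := Nat.cast_nonneg _
      rw [show 2 * ((n':ℝ) + 1) * ((n':ℝ) + 1 + (k:ℝ) + ((m:ℝ) - 1) + 1)
            = 2 * ((n':ℝ)+1) * ((n':ℝ) + (k:ℝ) + (m:ℝ) + 1) from by ring]
      rw [show ((n':ℝ) - 1 + 1) * ((n':ℝ) - 1 + ((k:ℝ) + 1) + 1) /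
            ((2 * ((n':ℝ) - 1) + ((k:ℝ) + 1) + ((m:ℝ) + 1) + 1) *
              (2 * ((n':ℝ) - 1) + ((k:ℝ) + 1) + ((m:ℝ) + 1) + 2))
            = (n':ℝ) * ((n':ℝ) + (k:ℝ) + 1) /
              ((2 * (n':ℝ) + (k:ℝ) + (m:ℝ) + 1) * (2 * (n':ℝ) + (k:ℝ) + (m:ℝ) + 2)) from by ring]
      rw [sqrt_mul_sqrt_eq (2 * ((n':ℝ)+1) * ((n':ℝ) + (k:ℝ) + (m:ℝ) + 1))
            (((n':ℝ) + 1) * ((n':ℝ) + (k:ℝ) + 1) /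
              ((2 * (n':ℝ) + (k:ℝ) + (m:ℝ) + 1) * (2 * (n':ℝ) + (k:ℝ) + (m:ℝ) + 2)))
            ((n':ℝ)+1)
            (2*((n':ℝ)+(k:ℝ)+1)*((n':ℝ)+(k:ℝ)+(m:ℝ)+1) /
              ((2 * (n':ℝ) + (k:ℝ) + (m:ℝ) + 1) * (2 * (n':ℝ) + (k:ℝ) + (m:ℝ) + 2)))
            (by positivity) (by positivity) (by ring)]
      rw [sqrt_mul_sqrt_eq ((n':ℝ) * ((n':ℝ) + (k:ℝ) + 1) /
              ((2 * (n':ℝ) + (k:ℝ) + (m:ℝ) + 1) * (2 * (n':ℝ) + (k:ℝ) + (m:ℝ) + 2)))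
            (2 * (n':ℝ) * ((n':ℝ) + (k:ℝ) + (m:ℝ) + 1))
            (n':ℝ)
            (2*((n':ℝ)+(k:ℝ)+1)*((n':ℝ)+(k:ℝ)+(m:ℝ)+1) /
              ((2 * (n':ℝ) + (k:ℝ) + (m:ℝ) + 1) * (2 * (n':ℝ) + (k:ℝ) + (m:ℝ) + 2)))
            (by positivity) hN (by ring)]
      rw [sqrt_mul_sqrt_eq 2
            (((n':ℝ) + (k:ℝ) + 1) * ((n':ℝ) + (k:ℝ) + (m:ℝ) + 1) /
              ((2 * (n':ℝ) + (k:ℝ) + (m:ℝ) + 1) * (2 * (n':ℝ) + (k:ℝ) + (m:ℝ) + 2)))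
            1
            (2*((n':ℝ)+(k:ℝ)+1)*((n':ℝ)+(k:ℝ)+(m:ℝ)+1) /
              ((2 * (n':ℝ) + (k:ℝ) + (m:ℝ) + 1) * (2 * (n':ℝ) + (k:ℝ) + (m:ℝ) + 2)))
            (by norm_num) (by norm_num) (by ring)]
      ring
  · rcases eq_or_ne n (n'+1) with rfl|hne2
    · simp only [Dplus, Rminus, Cmat, hm1, Nat.add_sub_cancel]
      split_ifs <;> first | omega | exact absurd trivial ‹¬True› | skip
      push_cast
      rw [zero_add, zero_add, zero_sub, mul_neg]
      have hN : (0:ℝ) ≤ (n':ℝ) := Nat.cast_nonneg _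
      have hK : (0:ℝ) ≤ (k:ℝ) := Nat.cast_nonneg _
      have hM : (1:ℝ) ≤ (m:ℝ) := by exact_mod_cast hm
      rw [show 2 * ((n':ℝ) + 1) * ((n':ℝ) + 1 + (k:ℝ) + ((m:ℝ) - 1) + 1)
            = 2 * ((n':ℝ)+1) * ((n':ℝ) + (k:ℝ) + (m:ℝ) + 1) from by ring]
      rw [sqrt_mul_sqrt_eq (2 * ((n':ℝ)+1) * ((n':ℝ) + (k:ℝ) + (m:ℝ) + 1))
            (((n':ℝ) + 1 + (m:ℝ)) * ((n':ℝ) + 1 + (k:ℝ) + (m:ℝ)) /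
              ((2 * ((n':ℝ) + 1) + (k:ℝ) + (m:ℝ)) * (2 * ((n':ℝ) + 1) + (k:ℝ) + (m:ℝ) + 1)))
            ((n':ℝ)+(k:ℝ)+(m:ℝ)+1)
            (2*((n':ℝ)+1)*((n':ℝ)+(m:ℝ)+1) /
              ((2 * ((n':ℝ) + 1) + (k:ℝ) + (m:ℝ)) * (2 * ((n':ℝ) + 1) + (k:ℝ) + (m:ℝ) + 1)))
            (by positivity) (by nlinarith) (by ring)]
      rw [sqrt_mul_sqrt_eq (((n':ℝ) + ((m:ℝ) + 1)) * ((n':ℝ) + ((k:ℝ) + 1) + ((m:ℝ) + 1)) /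
              ((2 * (n':ℝ) + ((k:ℝ) + 1) + ((m:ℝ) + 1)) * (2 * (n':ℝ) + ((k:ℝ) + 1) + ((m:ℝ) + 1) + 1)))
            (2 * ((n':ℝ) + 1) * ((n':ℝ) + 1 + (k:ℝ) + (m:ℝ) + 1))
            ((n':ℝ)+(k:ℝ)+(m:ℝ)+2)
            (2*((n':ℝ)+1)*((n':ℝ)+(m:ℝ)+1) /
              ((2 * ((n':ℝ) + 1) + (k:ℝ) + (m:ℝ)) * (2 * ((n':ℝ) + 1) + (k:ℝ) + (m:ℝ) + 1)))
            (by positivity) (by nlinarith) (by ring)]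
      rw [sqrt_mul_sqrt_eq 2
            (((n':ℝ) + 1) * ((n':ℝ) + 1 + (m:ℝ)) /
              ((2 * ((n':ℝ) + 1) + (k:ℝ) + (m:ℝ)) * (2 * ((n':ℝ) + 1) + (k:ℝ) + (m:ℝ) + 1)))
            1
            (2*((n':ℝ)+1)*((n':ℝ)+(m:ℝ)+1) /
              ((2 * ((n':ℝ) + 1) + (k:ℝ) + (m:ℝ)) * (2 * ((n':ℝ) + 1) + (k:ℝ) + (m:ℝ) + 1)))
            (by norm_num) (by norm_num) (by ring)]
      ring
    · simp only [Dplus, Rminus, Cmat]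
      split_ifs <;> first | omega | exact absurd trivial ‹¬True› | skip
      all_goals try ring
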